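/- arXiv:1905.04883 — 2 statements merged into one kernel-verified Lean document; each statement's English description precedes it below -/
import Mathlib

section
/- Fix t > 0 and x, y ∈ [-1,1]. For all n ≥ 1, the tail of the image-method series satisfies |R_n(y)| ≤ (1/4)(1 - erf((4n-2)/√(2t))), where R_n(y) = ∑_{k ≥ n+1} (a_k(t,x,y) + a_{-k}(t,x,y)) and a_k(t,x,y) = (1/√t)(φ((x-y-4k)/√t) - φ((x+y-2-4k)/√t)) with φ the standard Gaussian density. -/
open Real MeasureTheory Set

/-- The standard Gaussian density `φ(u) = e^{-u²/2}/√(2π)`. -/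
noncomputable def stdGauss (u : ℝ) : ℝ := Real.exp (-u ^ 2 / 2) / Real.sqrt (2 * π)

/-- The error function `erf(x) = (2/√π) ∫₀ˣ e^{-t²} dt`. -/
noncomputable def erf (x : ℝ) : ℝ := (2 / Real.sqrt π) * ∫ s in (0:ℝ)..x, Real.exp (-s ^ 2)

/-- The term `a_k(t,x,y) = (1/√t)(φ((x-y-4k)/√t) - φ((x+y-2-4k)/√t))` of the
image-method series. -/
noncomputable def aTerm (t x y : ℝ) (k : ℤ) : ℝ :=
  (1 / Real.sqrt t) * (stdGauss ((x - y - 4 * k) / Real.sqrt t)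
    - stdGauss ((x + y - 2 - 4 * k) / Real.sqrt t))

lemma stdGauss_nonneg (u : ℝ) : 0 ≤ stdGauss u :=
  div_nonneg (Real.exp_pos _).le (Real.sqrt_nonneg _)

lemma stdGauss_le {a b : ℝ} (h : |b| ≤ |a|) : stdGauss a ≤ stdGauss b := by
  unfold stdGauss
  have hs : (0:ℝ) < Real.sqrt (2*π) := Real.sqrt_pos.mpr (by positivity)
  rw [div_le_div_iff_of_pos_right hs]
  exact Real.exp_le_exp.mpr (by nlinarith [sq_abs a, sq_abs b, abs_nonneg b])

lemma gauss_mono {c a b : ℝ} (hc : 0 < c) (h : |b| ≤ |a|) :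
    (1/c) * stdGauss (a/c) ≤ (1/c) * stdGauss (b/c) := by
  apply mul_le_mul_of_nonneg_left _ (by positivity)
  apply stdGauss_le
  rw [abs_div, abs_div, abs_of_pos hc]
  gcongr

lemma summable_gauss {c : ℝ} (hc : 0 < c) (pt : ℕ → ℝ) (hpt : ∀ k : ℕ, 4*(k:ℝ) ≤ |pt k|) :
    Summable fun k => (1/c) * stdGauss (pt k / c) := by
  have hs2 : (0:ℝ) < Real.sqrt (2*π) := Real.sqrt_pos.mpr (by positivity)
  have hgeom : Summable fun k : ℕ => ((1/c)/Real.sqrt (2*π)) * (Real.exp (-8/c^2))^k := by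
    have hr : Real.exp (-8/c^2) < 1 := by
      apply Real.exp_lt_one_iff.mpr
      apply div_neg_of_neg_of_pos (by norm_num) (by positivity)
    exact Summable.mul_left _ (summable_geometric_of_lt_one (Real.exp_pos _).le hr)
  refine Summable.of_nonneg_of_le
    (fun k => mul_nonneg (by positivity) (stdGauss_nonneg _))
    (fun k => ?_) hgeom
  have hkk : (k:ℝ) ≤ (k:ℝ)^2 := by exact_mod_cast Nat.le_self_pow two_ne_zero k
  have h16 : (16:ℝ)*(k:ℝ) ≤ pt k ^ 2 := by
    nlinarith [hpt k, abs_nonneg (pt k), sq_abs (pt k), Nat.cast_nonneg (α := ℝ) k]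
  have hexp : -(pt k / c)^2/2 ≤ (k:ℝ) * (-8/c^2) := by
    rw [div_pow,
      show -(pt k ^2 / c^2)/2 = -(pt k^2/2)/c^2 by ring,
      show (k:ℝ) * (-8/c^2) = -(8*(k:ℝ))/c^2 by ring]
    gcongr
    linarith
  calc (1/c) * stdGauss (pt k / c)
      ≤ (1/c) * (Real.exp ((k:ℝ)*(-8/c^2)) / Real.sqrt (2*π)) := by
        unfold stdGauss
        have := Real.exp_le_exp.mpr hexp
        have h0 : (0:ℝ) ≤ 1/c := by positivity
        gcongr
    _ = ((1/c)/Real.sqrt (2*π)) * (Real.exp (-8/c^2))^k := by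
        rw [← Real.exp_nat_mul]; ring

lemma tsum_sub_succ (U : ℕ → ℝ) (hU : Summable U) : ∑' k, (U k - U (k+1)) = U 0 := by
  have h2 : Summable fun k => U (k+1) := (summable_nat_add_iff 1).mpr hU
  rw [Summable.tsum_sub hU h2, Summable.tsum_eq_zero_add hU]
  ring

lemma abs_tsum_le_of_telescope {F U P V Q : ℕ → ℝ}
    (hF : ∀ k, F k = (U k - P k) + (V k - Q k))
    (hUs : Summable U) (hPs : Summable P) (hVs : Summable V) (hQs : Summable Q)
    (hVQ : ∀ k, V k ≤ Q k) (hPU : ∀ k, P k ≤ U k)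
    (hPU' : ∀ k, U (k+1) ≤ P k) (hQV : ∀ k, Q (k+1) ≤ V k)
    {B : ℝ} (hU0 : U 0 ≤ B) (hQ0 : Q 0 ≤ B) :
    |∑' k, F k| ≤ B := by
  have hUs' : Summable fun k => U (k+1) := (summable_nat_add_iff 1).mpr hUs
  have hQs' : Summable fun k => Q (k+1) := (summable_nat_add_iff 1).mpr hQs
  have hFs : Summable F := by
    have := (hUs.sub hPs).add (hVs.sub hQs)
    exact this.congr (fun k => (hF k).symm)
  rw [abs_le]
  constructor
  · -- lower bound : -B ≤ ∑' F
    have h1 : ∑' k, -(Q k - Q (k+1)) ≤ ∑' k, F k := by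
      apply Summable.tsum_le_tsum _ ((hQs.sub hQs').neg) hFs
      intro k
      have h2 := hPU k
      have h3 := hQV k
      rw [hF k]
      linarith
    rw [tsum_neg, tsum_sub_succ Q hQs] at h1
    linarith
  · have h1 : ∑' k, F k ≤ ∑' k, (U k - U (k+1)) := by
      apply Summable.tsum_le_tsum _ hFs (hUs.sub hUs')
      intro k
      have h2 := hVQ k
      have h3 := hPU' k
      rw [hF k]
      linarith
    rw [tsum_sub_succ U hUs] at h1
    linarith

lemma gauss_le_erf_tail {t : ℝ} (ht : 0 < t) {n : ℕ} (hn : 1 ≤ n) :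
    (1/Real.sqrt t) * stdGauss ((4*n)/Real.sqrt t)
      ≤ (1/4) * (1 - erf ((4*n-2)/Real.sqrt (2*t))) := by
  have hn' : (1:ℝ) ≤ (n:ℝ) := by exact_mod_cast hn
  have h2t : (0:ℝ) < 2*t := by linarith
  have hs2t : (0:ℝ) < Real.sqrt (2*t) := Real.sqrt_pos.mpr h2t
  have hst : (0:ℝ) < Real.sqrt t := Real.sqrt_pos.mpr ht
  have hsπ : (0:ℝ) < Real.sqrt π := Real.sqrt_pos.mpr pi_pos
  set Z : ℝ := (4*n-2)/Real.sqrt (2*t) with hZ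
  set Z' : ℝ := (4*n)/Real.sqrt (2*t) with hZ'
  have hZ0 : 0 ≤ Z := div_nonneg (by linarith) hs2t.le
  have hZZ' : Z ≤ Z' := (div_le_div_iff_of_pos_right hs2t).mpr (by linarith)
  have hcont : Continuous fun s : ℝ => Real.exp (-s^2) := by
    exact Real.continuous_exp.comp (continuous_pow 2).neg
  have h1 : (Z' - Z) * Real.exp (-Z'^2) ≤ ∫ s in Z..Z', Real.exp (-s^2) := by
    have hmono := intervalIntegral.integral_mono_on (f := fun _ => Real.exp (-Z'^2))
      (g := fun s => Real.exp (-s^2)) (μ := volume) hZZ'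
      intervalIntegrable_const (hcont.intervalIntegrable _ _)
      (fun s hs => Real.exp_le_exp.mpr (by
        have h1 : Z ≤ s := hs.1
        have h2 : s ≤ Z' := hs.2
        nlinarith))
    simpa [smul_eq_mul] using hmono
  have hIoi : ∫ s in Ioi (0:ℝ), Real.exp (-s^2) = Real.sqrt π / 2 := by
    have := integral_gaussian_Ioi 1
    simpa using this
  have h2 : ∫ s in (0:ℝ)..Z', Real.exp (-s^2) ≤ Real.sqrt π / 2 := by
    rw [intervalIntegral.integral_of_le (le_trans hZ0 hZZ'), ← hIoi]
    apply setIntegral_mono_set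
    · have : IntegrableOn (fun s : ℝ => Real.exp (-1 * s^2)) (Ioi 0) volume :=
        (integrable_exp_neg_mul_sq one_pos).integrableOn
      simpa using this
    · exact Filter.Eventually.of_forall (fun s => (Real.exp_pos _).le)
    · exact HasSubset.Subset.eventuallyLE Ioc_subset_Ioi_self
  have h3 : (∫ s in (0:ℝ)..Z, Real.exp (-s^2)) + ∫ s in Z..Z', Real.exp (-s^2)
      = ∫ s in (0:ℝ)..Z', Real.exp (-s^2) :=
    intervalIntegral.integral_add_adjacent_intervals
      (hcont.intervalIntegrable _ _) (hcont.intervalIntegrable _ _)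
  have h4 : erf Z + (2/Real.sqrt π) * ((Z' - Z) * Real.exp (-Z'^2)) ≤ 1 := by
    have hkey : (∫ s in (0:ℝ)..Z, Real.exp (-s^2)) + (Z' - Z) * Real.exp (-Z'^2)
        ≤ Real.sqrt π / 2 := by linarith
    have h5 : (2/Real.sqrt π) * ((∫ s in (0:ℝ)..Z, Real.exp (-s^2))
        + (Z' - Z) * Real.exp (-Z'^2)) ≤ (2/Real.sqrt π) * (Real.sqrt π / 2) :=
      mul_le_mul_of_nonneg_left hkey (by positivity)
    have h6 : (2/Real.sqrt π) * (Real.sqrt π / 2) = 1 := by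
      field_simp
    rw [erf]
    nlinarith [h5, h6]
  -- now convert
  have hZval : Z' - Z = 2 / Real.sqrt (2*t) := by
    rw [hZ, hZ', div_sub_div_same]
    ring_nf
  have hexp : Real.exp (-Z'^2) = Real.exp (-((4*n)/Real.sqrt t)^2/2) := by
    congr 1
    rw [hZ', div_pow, div_pow, Real.sq_sqrt h2t.le, Real.sq_sqrt ht.le]
    ring
  have hfin : (1/Real.sqrt t) * stdGauss ((4*n)/Real.sqrt t)
      = (1/4) * ((2/Real.sqrt π) * ((Z' - Z) * Real.exp (-Z'^2))) := by
    rw [stdGauss, hexp, hZval, Real.sqrt_mul (by norm_num : (0:ℝ) ≤ 2) π,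
      Real.sqrt_mul (by norm_num : (0:ℝ) ≤ 2) t]
    have h2pos : (0:ℝ) < Real.sqrt 2 := Real.sqrt_pos.mpr (by norm_num)
    field_simp
    ring
  rw [hfin]
  have : (0:ℝ) < 4 := by norm_num
  nlinarith [h4]


/-- For `t > 0`, `x, y ∈ [-1,1]` and `n ≥ 1`, the tail
`R_n(y) = ∑_{k ≥ n+1} (a_k(t,x,y) + a_{-k}(t,x,y))` of the image-method series satisfies
`|R_n(y)| ≤ (1/4)(1 - erf((4n-2)/√(2t)))`. -/
theorem abs_remainder_image_series_le {t : ℝ} (ht : 0 < t) {x y : ℝ}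
    (hx : x ∈ Icc (-1 : ℝ) 1) (hy : y ∈ Icc (-1 : ℝ) 1) {n : ℕ} (hn : 1 ≤ n) :
    |∑' k : ℕ, (aTerm t x y ((n : ℤ) + 1 + k) + aTerm t x y (-((n : ℤ) + 1 + k)))|
      ≤ (1 / 4) * (1 - erf ((4 * n - 2) / Real.sqrt (2 * t))) := by
  obtain ⟨hx1, hx2⟩ := hx
  obtain ⟨hy1, hy2⟩ := hy
  have hn' : (1:ℝ) ≤ (n:ℝ) := by exact_mod_cast hn
  have hc : (0:ℝ) < Real.sqrt t := Real.sqrt_pos.mpr ht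
  refine le_trans (abs_tsum_le_of_telescope
    (U := fun k : ℕ => (1/Real.sqrt t) * stdGauss ((x - y - 4*((n:ℝ)+1+k)) / Real.sqrt t))
    (P := fun k : ℕ => (1/Real.sqrt t) * stdGauss ((x + y - 2 - 4*((n:ℝ)+1+k)) / Real.sqrt t))
    (V := fun k : ℕ => (1/Real.sqrt t) * stdGauss ((x - y + 4*((n:ℝ)+1+k)) / Real.sqrt t))
    (Q := fun k : ℕ => (1/Real.sqrt t) * stdGauss ((x + y - 2 + 4*((n:ℝ)+1+k)) / Real.sqrt t))
    ?_ ?_ ?_ ?_ ?_ ?_ ?_ ?_ ?_ ?_ ?_) (gauss_le_erf_tail ht hn)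
  · -- hF
    intro k
    simp only [aTerm]
    push_cast
    ring_nf
  · -- Summable U
    apply summable_gauss hc
    intro k
    have hk : (0:ℝ) ≤ (k:ℝ) := Nat.cast_nonneg k
    rw [abs_of_nonpos (by nlinarith)]
    nlinarith
  · -- Summable P
    apply summable_gauss hc
    intro k
    have hk : (0:ℝ) ≤ (k:ℝ) := Nat.cast_nonneg k
    rw [abs_of_nonpos (by nlinarith)]
    nlinarith
  · -- Summable V
    apply summable_gauss hc
    intro k
    have hk : (0:ℝ) ≤ (k:ℝ) := Nat.cast_nonneg k
    rw [abs_of_nonneg (by nlinarith)]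
    nlinarith
  · -- Summable Q
    apply summable_gauss hc
    intro k
    have hk : (0:ℝ) ≤ (k:ℝ) := Nat.cast_nonneg k
    rw [abs_of_nonneg (by nlinarith)]
    nlinarith
  · -- V k ≤ Q k
    intro k
    apply gauss_mono hc
    have hk : (0:ℝ) ≤ (k:ℝ) := Nat.cast_nonneg k
    rw [abs_of_nonneg (by nlinarith), abs_of_nonneg (by nlinarith)]
    nlinarith
  · -- P k ≤ U k
    intro k
    apply gauss_mono hc
    have hk : (0:ℝ) ≤ (k:ℝ) := Nat.cast_nonneg k
    rw [abs_of_nonpos (by nlinarith), abs_of_nonpos (by nlinarith)]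
    nlinarith
  · -- U (k+1) ≤ P k
    intro k
    apply gauss_mono hc
    have hk : (0:ℝ) ≤ (k:ℝ) := Nat.cast_nonneg k
    push_cast
    rw [abs_of_nonpos (by nlinarith), abs_of_nonpos (by nlinarith)]
    nlinarith
  · -- Q (k+1) ≤ V k
    intro k
    apply gauss_mono hc
    have hk : (0:ℝ) ≤ (k:ℝ) := Nat.cast_nonneg k
    push_cast
    rw [abs_of_nonneg (by nlinarith), abs_of_nonneg (by nlinarith)]
    nlinarith
  · -- U 0 ≤ B
    apply gauss_mono hc
    push_cast
    rw [abs_of_nonneg (by nlinarith), abs_of_nonpos (by nlinarith)]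
    nlinarith
  · -- Q 0 ≤ B
    apply gauss_mono hc
    push_cast
    rw [abs_of_nonneg (by nlinarith), abs_of_nonneg (by nlinarith)]
    nlinarith
end

section
/- Fix t > 0 and x, y ∈ [-1,1]. For every n ≥ n₀ with n₀ = ⌊√t/4⌋ + 2, the term a_n(t,x,y) + a_{-n}(t,x,y) is nonpositive, where a_k(t,x,y) = (1/√t)(φ((x-y-4k)/√t) - φ((x+y-2-4k)/√t)). -/
open Real Set

/-!
By the symmetry `φ(-u) = φ(u)`, `a_n + a_{-n}` is `1/√t` times `φ(b) + φ(d) - φ(a) - φ(c)`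
for the points `a, b, c, d = (4n + x + y - 2, 4n + x - y, 4n + 2 - x - y, 4n + y - x) / √t`,
which satisfy `a ≤ b, d ≤ c` and `a + c = b + d`. Since `φ'' = (u² - 1) φ`, the density is convex
on `[1, ∞)`, and for `n ≥ n₀` the smallest point satisfies `a ≥ 1`; convexity then gives
`φ(b) + φ(d) ≤ φ(a) + φ(c)`.
-/

theorem ConvexOn.map_add_map_le_of_add_eq {s : Set ℝ} {f : ℝ → ℝ} (hf : ConvexOn ℝ s f)
    {a b c d : ℝ} (ha : a ∈ s) (hc : c ∈ s) (hab : a ≤ b) (hbc : b ≤ c) (hsum : a + c = b + d) :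
    f b + f d ≤ f a + f c := by
  rcases hab.trans hbc |>.eq_or_lt with hac | hac
  · obtain rfl : b = a := by linarith
    obtain rfl : d = b := by linarith
    rw [← hac]
  set θ := (c - b) / (c - a)
  have hθ : θ * (c - a) = c - b := div_mul_cancel₀ _ (sub_ne_zero.mpr hac.ne')
  have hθ₀ : 0 ≤ θ := div_nonneg (by linarith) (by linarith)
  have hθ₁ : θ ≤ 1 := (div_le_one (by linarith)).mpr (by linarith)
  have hb : θ • a + (1 - θ) • c = b := by simp only [smul_eq_mul]; linarith
  have hd : (1 - θ) • a + θ • c = d := by simp only [smul_eq_mul]; linarith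
  have h₁ := hf.2 ha hc hθ₀ (sub_nonneg.mpr hθ₁) (add_sub_cancel θ 1)
  have h₂ := hf.2 ha hc (sub_nonneg.mpr hθ₁) hθ₀ (sub_add_cancel 1 θ)
  rw [hb, smul_eq_mul, smul_eq_mul] at h₁
  rw [hd, smul_eq_mul, smul_eq_mul] at h₂
  linarith

theorem stdGauss_neg (u : ℝ) : stdGauss (-u) = stdGauss u := by
  simp [stdGauss]

theorem hasDerivAt_stdGauss (u : ℝ) : HasDerivAt stdGauss (-u * stdGauss u) u := by
  have h : HasDerivAt (fun v : ℝ => -v ^ 2 / 2) (-u) u :=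
    ((hasDerivAt_pow 2 u).neg.div_const 2).congr_deriv (by ring)
  exact (h.exp.div_const _).congr_deriv (by unfold stdGauss; ring)

theorem hasDerivAt_neg_mul_stdGauss (u : ℝ) :
    HasDerivAt (fun v => -v * stdGauss v) ((u ^ 2 - 1) * stdGauss u) u :=
  ((hasDerivAt_neg u).mul (hasDerivAt_stdGauss u)).congr_deriv (by ring)

theorem convexOn_stdGauss_Ici_one : ConvexOn ℝ (Ici 1) stdGauss :=
  convexOn_of_hasDerivWithinAt2_nonneg (convex_Ici 1)
    (fun u _ => (hasDerivAt_stdGauss u).continuousAt.continuousWithinAt)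
    (fun u _ => (hasDerivAt_stdGauss u).hasDerivWithinAt)
    (fun u _ => (hasDerivAt_neg_mul_stdGauss u).hasDerivWithinAt)
    (fun u hu => by
      rw [interior_Ici, mem_Ioi] at hu
      have : 0 ≤ u ^ 2 - 1 := by nlinarith
      have : 0 ≤ stdGauss u := by unfold stdGauss; positivity
      positivity)

theorem aTerm_add_aTerm_neg (t x y : ℝ) (k : ℤ) :
    aTerm t x y k + aTerm t x y (-k) = (1 / √t) *
      (stdGauss ((4 * k + x - y) / √t) + stdGauss ((4 * k + y - x) / √t)
        - (stdGauss ((4 * k + x + y - 2) / √t) + stdGauss ((4 * k + 2 - x - y) / √t))) := by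
  have hD : (x - y - 4 * k) / √t = -((4 * k + y - x) / √t) := by ring
  have hC : (x + y - 2 - 4 * k) / √t = -((4 * k + 2 - x - y) / √t) := by ring
  have hB : x - y - 4 * (-k : ℝ) = 4 * k + x - y := by ring
  have hA : x + y - 2 - 4 * (-k : ℝ) = 4 * k + x + y - 2 := by ring
  simp only [aTerm, Int.cast_neg, hD, hC, hB, hA, stdGauss_neg]
  ring

/-- For `t > 0`, `x, y ∈ [-1,1]` and every `n ≥ n₀ = ⌊√t/4⌋ + 2`, the paired term
`a_n(t,x,y) + a_{-n}(t,x,y)` is nonpositive. -/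
theorem paired_term_nonpos {t : ℝ} (ht : 0 < t) {x y : ℝ}
    (hx : x ∈ Icc (-1 : ℝ) 1) (hy : y ∈ Icc (-1 : ℝ) 1) {n : ℕ}
    (hn : ⌊Real.sqrt t / 4⌋₊ + 2 ≤ n) :
    aTerm t x y (n : ℤ) + aTerm t x y (-(n : ℤ)) ≤ 0 := by
  obtain ⟨hx₁, hx₂⟩ := hx
  obtain ⟨hy₁, hy₂⟩ := hy
  have hs : 0 < √t := Real.sqrt_pos.mpr ht
  have hsa : √t ≤ 4 * n + x + y - 2 := by
    have hfloor := Nat.lt_floor_add_one (√t / 4)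
    have hn' : (⌊√t / 4⌋₊ : ℝ) + 2 ≤ n := by exact_mod_cast hn
    linarith
  rw [aTerm_add_aTerm_neg, Int.cast_natCast]
  refine mul_nonpos_of_nonneg_of_nonpos (by positivity) (sub_nonpos.mpr ?_)
  refine convexOn_stdGauss_Ici_one.map_add_map_le_of_add_eq ?_ ?_ ?_ ?_ ?_
  · exact (one_le_div hs).mpr hsa
  · exact (one_le_div hs).mpr (by linarith)
  · exact div_le_div_of_nonneg_right (by linarith) hs.le
  · exact div_le_div_of_nonneg_right (by linarith) hs.le
  · field_simp
    ring
end
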